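/- Let P_1,…,P_N be orthogonal projections onto subspaces of EuclideanSpace ℝ (Fin n) and let p_1,…,p_N ∈ [1,∞). Suppose that for every a with ‖a‖ ≤ 1: Σ_{j=1}^N (1/p_j) ψ(‖P_j a‖) ≤ ψ(‖a‖). Then Σ_{j=1}^N (1/p_j) P_j ≤ I in the Loewner order. (This follows since ψ(x) = x² + O(x⁴) as x → 0.) -/

import Mathlib

/-!
Since `ψ(t) = t²/2 + O(t³)` as `t → 0`, testing the hypothesis on `a = t • x` and letting
`t → 0⁺` compares the coefficients `Σ_j (1/p_j) ‖P_j x‖² / 2` and `‖x‖² / 2` of `t²` on the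
two sides.
-/

/-- `ψ(x) = (1/2)[(1+x) log(1+x) + (1-x) log(1-x)]`, with the convention `0 · log 0 = 0`
(automatic since `Real.log 0 = 0`). -/
noncomputable def psi (x : ℝ) : ℝ :=
  (1 / 2) * ((1 + x) * Real.log (1 + x) + (1 - x) * Real.log (1 - x))

open Filter Asymptotics Topology

lemma abs_psi_sub_sq_le {t : ℝ} (ht : |t| ≤ 1 / 2) : |psi t - t ^ 2 / 2| ≤ 2 * |t| ^ 3 := by
  have hcube : |t| ^ 3 / (1 - |t|) ≤ 2 * |t| ^ 3 := by
    rw [div_le_iff₀ (by linarith)]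
    nlinarith [pow_nonneg (abs_nonneg t) 3]
  have hplus : |-t + t ^ 2 / 2 + Real.log (1 + t)| ≤ 2 * |t| ^ 3 := by
    have h := Real.abs_log_sub_add_sum_range_le (x := -t) (by rw [abs_neg]; linarith) 2
    simp only [Finset.sum_range_succ, Finset.sum_range_zero, abs_neg, sub_neg_eq_add] at h
    norm_num at h
    exact h.trans hcube
  have hminus : |t + t ^ 2 / 2 + Real.log (1 - t)| ≤ 2 * |t| ^ 3 := by
    have h := Real.abs_log_sub_add_sum_range_le (x := t) (by linarith) 2
    simp only [Finset.sum_range_succ, Finset.sum_range_zero] at h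
    norm_num at h
    exact h.trans hcube
  have h1 : 0 ≤ 1 + t := by linarith [neg_abs_le t]
  have h2 : 0 ≤ 1 - t := by linarith [le_abs_self t]
  -- the quadratic parts of the two logarithms combine exactly to `t²/2`
  calc |psi t - t ^ 2 / 2|
      = |(1 + t) * (-t + t ^ 2 / 2 + Real.log (1 + t))
          + (1 - t) * (t + t ^ 2 / 2 + Real.log (1 - t))| / 2 := by
        unfold psi; rw [← abs_two, ← abs_div, abs_two]; congr 1; ring
    _ ≤ ((1 + t) * (2 * |t| ^ 3) + (1 - t) * (2 * |t| ^ 3)) / 2 := by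
        gcongr
        refine (abs_add_le _ _).trans (add_le_add ?_ ?_)
        · rw [abs_mul, abs_of_nonneg h1]; gcongr
        · rw [abs_mul, abs_of_nonneg h2]; gcongr
    _ = 2 * |t| ^ 3 := by ring

lemma isBigO_psi_sub_sq : (fun t => psi t - t ^ 2 / 2) =O[𝓝 0] (fun t => t ^ 3) := by
  refine IsBigO.of_bound 2 ?_
  filter_upwards [Metric.closedBall_mem_nhds (0 : ℝ) (by norm_num : (0 : ℝ) < 1 / 2)] with t ht
  rw [Metric.mem_closedBall, dist_zero_right] at ht
  simpa [Real.norm_eq_abs, abs_pow] using abs_psi_sub_sq_le ht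

lemma isBigO_psi_mul_sub_sq (q : ℝ) :
    (fun t => psi (q * t) - q ^ 2 / 2 * t ^ 2) =O[𝓝 0] (fun t => t ^ 3) := by
  have hq : Tendsto (fun t : ℝ => q * t) (𝓝 0) (𝓝 0) := by
    simpa using (continuous_const_mul q).tendsto 0
  refine ((isBigO_psi_sub_sq.comp_tendsto hq).congr (fun t => ?_) (fun t => ?_)).trans
    ((isBigO_refl (fun t : ℝ => t ^ 3) _).const_mul_left (q ^ 3))
  · simp only [Function.comp_apply]; ring
  · simp only [Function.comp_apply]; ring

lemma nonpos_of_eventually_nonpos_of_isBigO {h : ℝ → ℝ} {c : ℝ}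
    (hle : ∀ᶠ t in 𝓝[>] 0, h t ≤ 0)
    (hO : (fun t => h t - c * t ^ 2) =O[𝓝[>] 0] (fun t => t ^ 3)) : c ≤ 0 := by
  obtain ⟨C, hC⟩ := hO.bound
  have hlim : Tendsto (fun t : ℝ => C * t) (𝓝[>] 0) (𝓝 (C * 0)) :=
    ((continuous_const_mul C).tendsto 0).mono_left nhdsWithin_le_nhds
  refine mul_zero C ▸ ge_of_tendsto hlim ?_
  filter_upwards [hle, hC, self_mem_nhdsWithin] with t hle hC (ht : 0 < t)
  rw [Real.norm_eq_abs, Real.norm_eq_abs, abs_of_pos (pow_pos ht 3)] at hC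
  have : c * t ^ 2 ≤ C * t * t ^ 2 := by nlinarith [neg_abs_le (h t - c * t ^ 2)]
  exact le_of_mul_le_mul_right this (pow_pos ht 2)

theorem loewner_of_psi_subadditivity_general {n N : ℕ}
    (V : Fin N → Submodule ℝ (EuclideanSpace ℝ (Fin n)))
    (p : Fin N → ℝ)
    (hpsi : ∀ a : EuclideanSpace ℝ (Fin n), ‖a‖ ≤ 1 →
      ∑ j, (1 / p j) * psi ‖((V j).orthogonalProjectionOnto a : EuclideanSpace ℝ (Fin n))‖ ≤
        psi ‖a‖) :
    ∀ x : EuclideanSpace ℝ (Fin n),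
      ∑ j, (1 / p j) * ‖((V j).orthogonalProjectionOnto x : EuclideanSpace ℝ (Fin n))‖ ^ 2 ≤
        ‖x‖ ^ 2 := by
  intro x
  set q : Fin N → ℝ := fun j => ‖((V j).orthogonalProjectionOnto x : EuclideanSpace ℝ (Fin n))‖
  have norm_smul_of_pos {t : ℝ} (ht : 0 < t) (y : EuclideanSpace ℝ (Fin n)) :
      ‖t • y‖ = ‖y‖ * t := by rw [norm_smul, Real.norm_of_nonneg ht.le, mul_comm]
  suffices (∑ j, 1 / p j * q j ^ 2 - ‖x‖ ^ 2) / 2 ≤ 0 by linarith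
  refine nonpos_of_eventually_nonpos_of_isBigO
    (h := fun t => ∑ j, 1 / p j * psi (q j * t) - psi (‖x‖ * t)) ?_ ?_
  · have hsmall : ∀ᶠ t in 𝓝 (0 : ℝ), ‖t • x‖ < 1 := by
      refine (continuous_id.smul continuous_const).norm.tendsto' 0 0 ?_ |>.eventually
        (gt_mem_nhds one_pos)
      simp
    filter_upwards [nhdsWithin_le_nhds hsmall, self_mem_nhdsWithin] with t hsmall (ht : 0 < t)
    have h := hpsi (t • x) hsmall.le
    simp only [map_smul, Submodule.coe_smul, norm_smul_of_pos ht] at h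
    exact sub_nonpos.mpr h
  · refine ((IsBigO.fun_sum (s := Finset.univ) fun j _ => (isBigO_psi_mul_sub_sq (q j)).const_mul_left (1 / p j)).sub
      (isBigO_psi_mul_sub_sq ‖x‖)).mono nhdsWithin_le_nhds |>.congr_left fun t => ?_
    have hquad : ∑ j, 1 / p j * (q j ^ 2 / 2 * t ^ 2) = (∑ j, 1 / p j * q j ^ 2) / 2 * t ^ 2 := by
      rw [Finset.sum_div, Finset.sum_mul]
      exact Finset.sum_congr rfl fun j _ => by ring
    simp only [mul_sub, Finset.sum_sub_distrib]
    rw [hquad]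
    ring

/-- Necessity of the Loewner condition for the `ψ`-inequality: if
`Σ_j (1/p_j) ψ(‖P_j a‖) ≤ ψ(‖a‖)` for all `a` with `‖a‖ ≤ 1`, then
`Σ_j (1/p_j) P_j ≤ I` in the Loewner order. -/
theorem loewner_of_psi_subadditivity {n N : ℕ}
    (V : Fin N → Submodule ℝ (EuclideanSpace ℝ (Fin n)))
    (p : Fin N → ℝ) (hp : ∀ j, 1 ≤ p j)
    (hpsi : ∀ a : EuclideanSpace ℝ (Fin n), ‖a‖ ≤ 1 →
      ∑ j, (1 / p j) * psi ‖((V j).orthogonalProjectionOnto a : EuclideanSpace ℝ (Fin n))‖ ≤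
        psi ‖a‖) :
    ∀ x : EuclideanSpace ℝ (Fin n),
      ∑ j, (1 / p j) * ‖((V j).orthogonalProjectionOnto x : EuclideanSpace ℝ (Fin n))‖ ^ 2 ≤
        ‖x‖ ^ 2 :=
  loewner_of_psi_subadditivity_general V p hpsi
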